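/- arXiv:1110.5786 — 2 statements merged into one kernel-verified Lean document; each statement's English description precedes it below -/
import Mathlib

section
/- Let n ≥ 1 and let G ≤ Diff̂(ℂⁿ,0) be an abelian subgroup of formal diffeomorphisms. Then at least one of the following holds: (1) there exists a nonzero formal vector field X̂ ∈ X̂(ℂⁿ,0) that is invariant by G; (2) G_Id = {Id}, i.e., the only element of G tangent to the identity is the identity. -/
noncomputable section

namespace FormalGroups

/-- Formal power series in `n` complex variables: `ℂ[[z₁,…,zₙ]]`. -/
abbrev FPS (n : ℕ) := MvPowerSeries (Fin n) ℂ

/-- Formal vector fields on `(ℂⁿ,0)`: derivations of `ℂ[[z₁,…,zₙ]]`. -/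
abbrev FVF (n : ℕ) := Derivation ℂ (FPS n) (FPS n)

/-- The group of formal diffeomorphisms of `(ℂⁿ,0)`, encoded (isomorphically,
via the pullback action on power series) as the opposite of the group of
`ℂ`-algebra automorphisms of `ℂ[[z₁,…,zₙ]]`.  For `f : FDiff n`, `f.unop` is
the pullback `h ↦ h ∘ f`; multiplication `f * g` corresponds to the
composition `f ∘ g` of formal diffeomorphisms. -/
abbrev FDiff (n : ℕ) := (FPS n ≃ₐ[ℂ] FPS n)ᵐᵒᵖ

/-- The coordinate power series `zᵢ`. -/
def Z {n : ℕ} (i : Fin n) : FPS n := MvPowerSeries.X i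

/-- The `i`-th component power series `f̂ᵢ` of a formal diffeomorphism. -/
def comp {n : ℕ} (f : FDiff n) (i : Fin n) : FPS n := f.unop (Z i)

/-- Total degree of a monomial exponent. -/
def deg {n : ℕ} (d : Fin n →₀ ℕ) : ℕ := d.sum fun _ m => m

/-- A formal vector field belongs to `X̂(ℂⁿ,0)`: its coefficients vanish at `0`. -/
def VanishesAtZero {n : ℕ} (X : FVF n) : Prop :=
  ∀ i, MvPowerSeries.constantCoeff (σ := Fin n) (R := ℂ) (X (Z i)) = 0

/-- `f` is tangent to the identity: `f(z) = z + (order ≥ 2)`. -/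
def TangentToId {n : ℕ} (f : FDiff n) : Prop :=
  (∀ i, MvPowerSeries.constantCoeff (σ := Fin n) (R := ℂ) (comp f i) = 0) ∧
  ∀ i j, MvPowerSeries.coeff (R := ℂ) (Finsupp.single j 1) (comp f i) = if j = i then 1 else 0

/-- `f = exp (t X)`, expressed coefficientwise: `f̂ᵢ = Σ_j (tʲ/j!) X̂ʲ(zᵢ)`. -/
def IsExpT {n : ℕ} (f : FDiff n) (t : ℂ) (X : FVF n) : Prop :=
  ∀ i d, MvPowerSeries.coeff (R := ℂ) d (comp f i) =
    ∑' j : ℕ, (t ^ j / (Nat.factorial j : ℂ)) * MvPowerSeries.coeff (R := ℂ) d ((⇑X)^[j] (Z i))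

/-- `f = exp X`. -/
def IsExp {n : ℕ} (f : FDiff n) (X : FVF n) : Prop := IsExpT f 1 X

/-- The vector field `X` is invariant by the formal diffeomorphism `f`
(`f_* X = X`), i.e. `X` commutes with the pullback of `f`. -/
def InvariantBy {n : ℕ} (f : FDiff n) (X : FVF n) : Prop :=
  ∀ h, X (f.unop h) = f.unop (X h)

/-- `f_* X = c • X`  (projective invariance, with factor `c`). -/
def ProjInvariantBy {n : ℕ} (f : FDiff n) (X : FVF n) (c : ℂ) : Prop :=
  ∀ h, X (f.unop h) = c • f.unop (X h)

/-- The two vector fields commute: `[X,Y] = 0`. -/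
def CommuteVF {n : ℕ} (X Y : FVF n) : Prop := ∀ h, X (Y h) = Y (X h)

/-- All terms of the power series have degree at least `m`. -/
def OrderGE {n : ℕ} (F : FPS n) (m : ℕ) : Prop :=
  ∀ d, deg d < m → MvPowerSeries.coeff (R := ℂ) d F = 0

/-- The vector field vanishes to order at least `m` at the origin. -/
def VFOrderGE {n : ℕ} (X : FVF n) (m : ℕ) : Prop := ∀ i, OrderGE (X (Z i)) m

/-- `f` is tangent to the identity with order (exactly) `k`:
`f(z) = z + f_{k+1}(z) + ⋯` with `f_{k+1} ≠ 0`. -/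
def TangentOrder {n : ℕ} (f : FDiff n) (k : ℕ) : Prop :=
  1 ≤ k ∧
  (∀ i d, deg d ≤ k → MvPowerSeries.coeff (R := ℂ) d (comp f i) = MvPowerSeries.coeff (R := ℂ) d (Z i)) ∧
  ∃ i d, deg d = k + 1 ∧ MvPowerSeries.coeff (R := ℂ) d (comp f i) ≠ 0

/-- A dicritic diffeomorphism of order `k`: `f(z) = z + p(z)·z + (order ≥ k+2)`,
with `p ≠ 0` homogeneous of degree `k`. -/
def IsDicriticDiffeo {n : ℕ} (f : FDiff n) (k : ℕ) : Prop :=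
  1 ≤ k ∧
  (∀ i d, deg d ≤ k → MvPowerSeries.coeff (R := ℂ) d (comp f i) = MvPowerSeries.coeff (R := ℂ) d (Z i)) ∧
  ∃ p : MvPolynomial (Fin n) ℂ, p.IsHomogeneous k ∧ p ≠ 0 ∧
    ∀ i d, deg d = k + 1 →
      MvPowerSeries.coeff (R := ℂ) d (comp f i) = MvPowerSeries.coeff (R := ℂ) d ((p : FPS n) * Z i)

/-- A dicritic vector field of index `k` (order `k+1`):
`X = p(z)·R⃗ + (order ≥ k+2)` with `p ≠ 0` homogeneous of degree `k`,
where `R⃗ = Σ zᵢ ∂/∂zᵢ` is the radial vector field. -/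
def IsDicriticVF {n : ℕ} (X : FVF n) (k : ℕ) : Prop :=
  1 ≤ k ∧ VFOrderGE X (k + 1) ∧
  ∃ p : MvPolynomial (Fin n) ℂ, p.IsHomogeneous k ∧ p ≠ 0 ∧
    ∀ i d, deg d = k + 1 →
      MvPowerSeries.coeff (R := ℂ) d (X (Z i)) = MvPowerSeries.coeff (R := ℂ) d ((p : FPS n) * Z i)

/-- A regular dicritic vector field of index `k`: dicritic, and for the
homogeneous parts `pᵢ = q i` of degree `k+2` there are indices `i₀, j₀` with
`p` and `z_{j₀} q_{i₀} − z_{i₀} q_{j₀}` coprime. -/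
def IsRegDicriticVF {n : ℕ} (X : FVF n) (k : ℕ) : Prop :=
  1 ≤ k ∧ VFOrderGE X (k + 1) ∧
  ∃ (p : MvPolynomial (Fin n) ℂ) (q : Fin n → MvPolynomial (Fin n) ℂ),
    p.IsHomogeneous k ∧ p ≠ 0 ∧
    (∀ i d, deg d = k + 1 →
      MvPowerSeries.coeff (R := ℂ) d (X (Z i)) = MvPowerSeries.coeff (R := ℂ) d ((p : FPS n) * Z i)) ∧
    (∀ i, (q i).IsHomogeneous (k + 2)) ∧
    (∀ i d, deg d = k + 2 →
      MvPowerSeries.coeff (R := ℂ) d (X (Z i)) = MvPolynomial.coeff d (q i)) ∧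
    ∃ i₀ j₀ : Fin n,
      IsRelPrime p (MvPolynomial.X j₀ * q i₀ - MvPolynomial.X i₀ * q j₀)

/-- A regular dicritic diffeomorphism: its infinitesimal generator
`log f` is a regular dicritic vector field. -/
def IsRegDicriticDiffeo {n : ℕ} (f : FDiff n) (k : ℕ) : Prop :=
  ∃ X : FVF n, IsRegDicriticVF X k ∧ IsExp f X

/-- The derivative (linear part) `Df(0)` of `f` at `0`, as a matrix. -/
def Dmat {n : ℕ} (f : FDiff n) : Matrix (Fin n) (Fin n) ℂ :=
  Matrix.of fun i j => MvPowerSeries.coeff (R := ℂ) (Finsupp.single j 1) (comp f i)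

/-- `L` is the linear diffeomorphism `z ↦ M z`. -/
def IsLinearWith {n : ℕ} (L : FDiff n) (M : Matrix (Fin n) (Fin n) ℂ) : Prop :=
  ∀ i, comp L i = ∑ j, M i j • Z j

/-- Formal partial derivative `∂/∂zᵢ` on `ℂ[[z₁,…,zₙ]]`. -/
def pd {n : ℕ} (i : Fin n) (F : FPS n) : FPS n :=
  fun d => ((d i : ℂ) + 1) * MvPowerSeries.coeff (R := ℂ) (d + Finsupp.single i 1) F

/-- A formal meromorphic one-form `Σⱼ (Aⱼ/C) dzⱼ`, presented with a common
denominator `C ≠ 0` (its coefficients are elements `Aⱼ/C` of the fraction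
field `K̂ₙ` of `ℂ[[z₁,…,zₙ]]`). -/
structure MeroForm (n : ℕ) where
  A : Fin n → FPS n
  C : FPS n
  hC : C ≠ 0

/-- The one-form is closed (`dω = 0`), with denominators cleared. -/
def FormClosed {n : ℕ} (ω : MeroForm n) : Prop :=
  ∀ i j, pd i (ω.A j) * ω.C - ω.A j * pd i ω.C = pd j (ω.A i) * ω.C - ω.A i * pd j ω.C

/-- `g*ω = ω` (invariance of the one-form under pullback), denominators cleared. -/
def FormInvariantBy {n : ℕ} (g : FDiff n) (ω : MeroForm n) : Prop :=
  ∀ j, (∑ i, g.unop (ω.A i) * pd j (comp g i)) * ω.C = ω.A j * g.unop ω.C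

/-- `g*ω = a ω₁ + b ω₂`, denominators cleared. -/
def FormPullbackComb {n : ℕ} (g : FDiff n) (ω ω₁ ω₂ : MeroForm n) (a b : ℂ) : Prop :=
  ∀ j, (∑ i, g.unop (ω.A i) * pd j (comp g i)) * (ω₁.C * ω₂.C)
    = (a • (ω₁.A j * ω₂.C) + b • (ω₂.A j * ω₁.C)) * g.unop ω.C

/-- `ω₁, ω₂` are `ℂ`-linearly independent as meromorphic one-forms. -/
def FormsIndepC {n : ℕ} (ω₁ ω₂ : MeroForm n) : Prop :=
  ∀ a b : ℂ, (∀ j, a • (ω₁.A j * ω₂.C) + b • (ω₂.A j * ω₁.C) = 0) → a = 0 ∧ b = 0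

/-- A formal curve: a nonzero non-invertible formal series. -/
def IsFormalCurve (φ : FPS 2) : Prop :=
  φ ≠ 0 ∧ MvPowerSeries.constantCoeff (σ := Fin 2) (R := ℂ) φ = 0

/-- The formal curve `φ` is invariant by `f`: `φ ∘ f = u·φ` for a unit `u`. -/
def CurveInvariantBy (f : FDiff 2) (φ : FPS 2) : Prop :=
  ∃ u : FPS 2, IsUnit u ∧ f.unop φ = u * φ

/-- Linear coefficient of `φ` in the variable `zᵢ` (the differential `Dφ(0)`). -/
def lc (i : Fin 2) (φ : FPS 2) : ℂ := MvPowerSeries.coeff (R := ℂ) (Finsupp.single i 1) φ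

/-- The formal curves `φ, ψ` are transverse: each tangent space (kernel of the
differential at `0`) is one-dimensional and together they span `ℂ²`;
equivalently the two differentials at `0` are linearly independent. -/
def Transverse (φ ψ : FPS 2) : Prop :=
  lc 0 φ * lc 1 ψ - lc 1 φ * lc 0 ψ ≠ 0

/-- The formal power series is convergent (defines a germ of holomorphic
function): its coefficients grow at most geometrically. -/
def IsConvergent {n : ℕ} (F : FPS n) : Prop :=
  ∃ M A : ℝ, ∀ d, ‖MvPowerSeries.coeff (R := ℂ) d F‖ ≤ M * A ^ deg d

/-- `g* X = (p/q)·X`, denominators cleared: the pullback `g* X = (g⁻¹)_* X`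
of the vector field `X` equals the rational multiple `(p/q) X`. -/
def PullbackEqRat {n : ℕ} (g : FDiff n) (X : FVF n) (p q : FPS n) : Prop :=
  ∀ h, q * g.unop (X (g.unop.symm h)) = p * X h

/-- `g* X = s X₁ + t X₂` (pullback of `X` is a constant combination). -/
def PullbackEqComb {n : ℕ} (g : FDiff n) (X X₁ X₂ : FVF n) (s t : ℂ) : Prop :=
  ∀ h, g.unop (X (g.unop.symm h)) = s • X₁ h + t • X₂ h

end FormalGroups

/-!
Let `f ∈ G` be tangent to the identity with `f ≠ id`, and let `Φ` be its pullback action on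
`ℂ[[z]]`. Then `Φ - 1` raises orders by at least one, so by the binomial expansion
`Φ^t = ∑ j, (t choose j) (Φ - 1)^j` every coefficient of `Φ^t h` is a polynomial in `t`. Its
derivative at `t = 0` defines the infinitesimal generator `log Φ`. It is a derivation because
`Φ^t` is multiplicative for all `t ∈ ℕ`, it is nonzero because in lowest order it agrees with
`Φ - 1`, and it commutes with every automorphism commuting with `Φ`, in particular with `G`.
-/

namespace Polynomial

variable (K : Type*) [Field K]

def choosePoly (j : ℕ) : K[X] := C (j.factorial : K)⁻¹ * descPochhammer K j

theorem eval_natCast_choosePoly [CharZero K] (m j : ℕ) :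
    (choosePoly K j).eval (m : K) = m.choose j := by
  rw [choosePoly, eval_mul, eval_C, descPochhammer_eval_eq_descFactorial,
    Nat.descFactorial_eq_factorial_mul_choose, Nat.cast_mul, inv_mul_cancel_left₀]
  exact_mod_cast j.factorial_ne_zero

theorem choosePoly_zero : choosePoly K 0 = 1 := by
  simp [choosePoly]

theorem choosePoly_one : choosePoly K 1 = X := by
  simp [choosePoly]

end Polynomial

namespace MvPowerSeries

open Polynomial (choosePoly choosePoly_zero choosePoly_one eval_natCast_choosePoly derivative)

section Order

variable {σ R : Type*} [CommRing R]

theorem le_order_sum {ι : Type*} (s : Finset ι) (f : ι → MvPowerSeries σ R) {m : ℕ∞}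
    (h : ∀ i ∈ s, m ≤ (f i).order) : m ≤ (∑ i ∈ s, f i).order :=
  le_order fun d hd => by
    rw [map_sum]
    exact Finset.sum_eq_zero fun i hi => coeff_of_lt_order (hd.trans_le (h i hi))

theorem one_le_order_X (i : σ) : 1 ≤ (X i : MvPowerSeries σ R).order :=
  one_le_order_iff_constCoeff_eq_zero.mpr (constantCoeff_X i)

theorem coeff_X_mul [DecidableEq σ] (i : σ) (f : MvPowerSeries σ R) (d : σ →₀ ℕ) :
    coeff d (X i * f) = if Finsupp.single i 1 ≤ d then coeff (d - Finsupp.single i 1) f else 0 := by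
  rw [X_def, coeff_monomial_mul, one_mul]

section LeastVariable

variable [LinearOrder σ]

open scoped Classical in
/-- Divides by `X i` the monomials of `f` whose least variable is `X i`. -/
def divLeastX (i : σ) (f : MvPowerSeries σ R) : MvPowerSeries σ R :=
  fun e => if ∀ j < i, e j = 0 then coeff (e + Finsupp.single i 1) f else 0

open scoped Classical in
theorem coeff_divLeastX (i : σ) (f : MvPowerSeries σ R) (e : σ →₀ ℕ) :
    coeff e (divLeastX i f) = if ∀ j < i, e j = 0 then coeff (e + Finsupp.single i 1) f else 0 :=
  rfl

theorem order_le_order_divLeastX_add_one (i : σ) (f : MvPowerSeries σ R) :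
    f.order ≤ (divLeastX i f).order + 1 := by
  refine ENat.forall_natCast_le_iff_le.mp fun m hm => ?_
  cases m with
  | zero => simp
  | succ m =>
    push_cast
    refine add_le_add_left (le_order fun e he => ?_) 1
    rw [coeff_divLeastX]
    split_ifs
    · refine coeff_of_lt_order (lt_of_lt_of_le ?_ hm)
      rw [map_add, Finsupp.degree_single]
      exact_mod_cast Nat.add_lt_add_right (by exact_mod_cast he) 1
    · rfl

theorem C_constantCoeff_add_sum_X_mul_divLeastX [Fintype σ] (f : MvPowerSeries σ R) :
    C (constantCoeff f) + ∑ i, X i * divLeastX i f = f := by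
  classical
  ext d
  simp only [map_add, map_sum, coeff_X_mul, coeff_divLeastX, coeff_C, ← ite_and]
  rcases eq_or_ne d 0 with rfl | hd
  · simp
  have hne : d.support.Nonempty := Finsupp.support_nonempty_iff.mpr hd
  have hleast (i : σ) :
      (Finsupp.single i 1 ≤ d ∧ ∀ j < i, (d - Finsupp.single i 1 : σ →₀ ℕ) j = 0) ↔
      i = d.support.min' hne := by
    simp only [Finsupp.single_le_iff, Finsupp.tsub_apply, Finsupp.single_apply]
    constructor
    · rintro ⟨hi, hlt⟩
      refine le_antisymm ?_ (d.support.min'_le i (by simp; omega))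
      by_contra! h
      have := hlt _ h
      rw [if_neg h.ne'] at this
      exact Finsupp.mem_support_iff.mp (d.support.min'_mem hne) (by omega)
    · rintro rfl
      refine ⟨Nat.one_le_iff_ne_zero.mpr (Finsupp.mem_support_iff.mp (d.support.min'_mem hne)),
        fun j hj => ?_⟩
      rw [if_neg hj.ne']
      by_contra h
      exact (d.support.min'_le j (Finsupp.mem_support_iff.mpr (by omega))).not_gt hj
  rw [if_neg hd, zero_add, Finset.sum_eq_single (d.support.min' hne)]
  · rw [if_pos ((hleast _).mpr rfl), tsub_add_cancel_of_le ((hleast _).mpr rfl).1]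
  · exact fun i _ hi => if_neg (mt (hleast i).mp hi)
  · simp

end LeastVariable

theorem exists_eq_C_add_sum_X_mul [Fintype σ] (f : MvPowerSeries σ R) :
    ∃ q : σ → MvPowerSeries σ R,
      f = C (constantCoeff f) + ∑ i, X i * q i ∧ ∀ i, f.order ≤ (q i).order + 1 :=
  letI := IsWellOrder.linearOrder (WellOrderingRel (α := σ))
  ⟨(divLeastX · f), (C_constantCoeff_add_sum_X_mul_divLeastX f).symm,
    (order_le_order_divLeastX_add_one · f)⟩

variable [Fintype σ] (Φ : MvPowerSeries σ R →ₐ[R] MvPowerSeries σ R)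

theorem order_le_order_map (hΦ : ∀ i, constantCoeff (Φ (X i)) = 0) (f : MvPowerSeries σ R) :
    f.order ≤ (Φ f).order := by
  refine ENat.forall_natCast_le_iff_le.mp fun m => ?_
  induction m generalizing f with
  | zero => simp
  | succ m ih =>
    intro hm
    obtain ⟨q, hf, hq⟩ := exists_eq_C_add_sum_X_mul f
    have hc : constantCoeff f = 0 :=
      one_le_order_iff_constCoeff_eq_zero.mp (le_trans (by exact_mod_cast m.succ_pos) hm)
    have hmq (i : σ) : (m : ℕ∞) ≤ (q i).order :=
      (ENat.add_le_add_iff_right ENat.one_ne_top).mp (by push_cast at hm; exact hm.trans (hq i))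
    rw [hf, hc, map_zero, zero_add, map_sum]
    refine le_order_sum _ _ fun i _ => ?_
    rw [map_mul, Nat.cast_succ, add_comm]
    exact (add_le_add (one_le_order_iff_constCoeff_eq_zero.mpr (hΦ i)) (ih _ (hmq i))).trans
      le_order_mul

theorem map_sub_self_eq_sum {f : MvPowerSeries σ R} {q : σ → MvPowerSeries σ R}
    (hf : f = C (constantCoeff f) + ∑ i, X i * q i) :
    Φ f - f = ∑ i, ((Φ (X i) - X i) * Φ (q i) + X i * (Φ (q i) - q i)) := by
  have hC : Φ (C (constantCoeff f)) = C (constantCoeff f) := by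
    rw [c_eq_algebraMap, Φ.commutes]
  rw [hf, map_add, hC, map_sum, add_sub_add_left_eq_sub, ← Finset.sum_sub_distrib]
  refine Finset.sum_congr rfl fun i _ => ?_
  rw [map_mul]
  ring

theorem order_add_one_le_order_map_sub_self (hΦ : ∀ i, 2 ≤ (Φ (X i) - X i).order)
    (f : MvPowerSeries σ R) : f.order + 1 ≤ (Φ f - f).order := by
  have hΦ₀ (i : σ) : constantCoeff (Φ (X i)) = 0 := by
    have h := one_le_order_iff_constCoeff_eq_zero.mp (le_trans (by norm_num) (hΦ i))
    rwa [map_sub, constantCoeff_X, sub_zero] at h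
  suffices h : ∀ m : ℕ, ∀ f : MvPowerSeries σ R, m ≤ f.order → (m + 1 : ℕ∞) ≤ (Φ f - f).order by
    refine ENat.forall_natCast_le_iff_le.mp fun m hm => ?_
    cases m with
    | zero => simp
    | succ m =>
      exact_mod_cast h m f ((ENat.add_le_add_iff_right ENat.one_ne_top).mp (by exact_mod_cast hm))
  intro m
  induction m using Nat.strong_induction_on with
  | _ m ih =>
  intro f hm
  obtain ⟨q, hf, hq⟩ := exists_eq_C_add_sum_X_mul f
  rw [map_sub_self_eq_sum Φ hf]
  refine le_order_sum _ _ fun i _ => min_order_le_add.trans' (le_min ?_ ?_)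
  · calc (m + 1 : ℕ∞) ≤ (q i).order + 1 + 1 := by gcongr; exact hm.trans (hq i)
      _ = 2 + (q i).order := by ring
      _ ≤ (Φ (X i) - X i).order + (Φ (q i)).order :=
        add_le_add (hΦ i) (order_le_order_map Φ hΦ₀ _)
      _ ≤ _ := le_order_mul
  · calc (m + 1 : ℕ∞) = 1 + m := add_comm _ _
      _ ≤ (X i).order + (Φ (q i) - q i).order := add_le_add (one_le_order_X i) ?_
      _ ≤ _ := le_order_mul
    rcases m with _ | k
    · simp
    · refine ih k (by omega) _ ((ENat.add_le_add_iff_right ENat.one_ne_top).mp ?_)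
      exact (by exact_mod_cast hm : ((k + 1 : ℕ) : ℕ∞) ≤ f.order).trans (hq i)

end Order

theorem constantCoeff_map_X_eq_zero {σ K : Type*} [Field K]
    (Ψ : MvPowerSeries σ K ≃ₐ[K] MvPowerSeries σ K) (i : σ) : constantCoeff (Ψ (X i)) = 0 := by
  by_contra h
  have hX : IsUnit (X i : MvPowerSeries σ K) := by
    simpa using (isUnit_iff_constantCoeff.mpr (isUnit_iff_ne_zero.mpr h)).map Ψ.symm
  simpa using hX.map (constantCoeff (σ := σ) (R := K))

section Log

variable {σ K : Type*} [Field K] (Φ : MvPowerSeries σ K →ₐ[K] MvPowerSeries σ K)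

def diffOp : Module.End K (MvPowerSeries σ K) := Φ.toLinearMap - 1

theorem diffOp_apply (f : MvPowerSeries σ K) : diffOp Φ f = Φ f - f := rfl

theorem pow_apply_eq_diffOp_add_one_pow (m : ℕ) (f : MvPowerSeries σ K) :
    (Φ ^ m) f = ((diffOp Φ + 1) ^ m) f := by
  rw [diffOp, sub_add_cancel, AlgHom.coe_pow, Module.End.coe_pow]
  rfl

theorem diffOp_pow_map_of_commute {Ψ : MvPowerSeries σ K →ₐ[K] MvPowerSeries σ K}
    (hcomm : ∀ f, Φ (Ψ f) = Ψ (Φ f)) (j : ℕ) (f : MvPowerSeries σ K) :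
    (diffOp Φ ^ j) (Ψ f) = Ψ ((diffOp Φ ^ j) f) := by
  induction j with
  | zero => rfl
  | succ j ih => rw [pow_succ', Module.End.mul_apply, Module.End.mul_apply, ih, diffOp_apply,
      diffOp_apply, hcomm, map_sub]

/-- `t ↦ coeff e (Φ^t f)` as a polynomial in `t`, read off the binomial expansion
`Φ^t = ∑ j, (t choose j) (Φ - 1)^j`: when `Φ` is tangent to the identity, `(Φ - 1)^j f` has order
at least `j`, so only the terms `j ≤ e.degree` contribute to `coeff e`. -/
def iterateCoeffPoly (e : σ →₀ ℕ) : MvPowerSeries σ K →ₗ[K] Polynomial K :=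
  ∑ j ∈ Finset.range (e.degree + 1), (coeff e ∘ₗ diffOp Φ ^ j).smulRight (choosePoly K j)

theorem iterateCoeffPoly_apply (e : σ →₀ ℕ) (f : MvPowerSeries σ K) :
    iterateCoeffPoly Φ e f =
      ∑ j ∈ Finset.range (e.degree + 1), coeff e ((diffOp Φ ^ j) f) • choosePoly K j := by
  simp [iterateCoeffPoly]

/-- The infinitesimal generator `d/dt Φ^t |_{t=0}` of `Φ`; for `Φ` tangent to the identity it is
`log Φ = ∑ j ≥ 1, (-1)^(j+1)/j • (Φ - 1)^j`. -/
def log : MvPowerSeries σ K →ₗ[K] MvPowerSeries σ K where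
  toFun f e := (derivative (iterateCoeffPoly Φ e f)).eval 0
  map_add' a b := funext fun e => by simp; rfl
  map_smul' c a := funext fun e => by simp; rfl

theorem coeff_log (f : MvPowerSeries σ K) (e : σ →₀ ℕ) :
    coeff e (log Φ f) = (derivative (iterateCoeffPoly Φ e f)).eval 0 :=
  rfl

variable {Φ}

theorem constantCoeff_log (f : MvPowerSeries σ K) : constantCoeff (log Φ f) = 0 := by
  rw [← coeff_zero_eq_constantCoeff_apply, coeff_log, iterateCoeffPoly_apply]
  simp [choosePoly_zero]

variable [Fintype σ]

theorem order_add_le_order_diffOp_pow (hΦ : ∀ i, 2 ≤ (Φ (X i) - X i).order) (j : ℕ)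
    (f : MvPowerSeries σ K) : f.order + j ≤ ((diffOp Φ ^ j) f).order := by
  induction j with
  | zero => simp
  | succ j ih =>
    rw [pow_succ', Module.End.mul_apply, diffOp_apply, Nat.cast_succ, ← add_assoc]
    exact (add_le_add ih le_rfl).trans (order_add_one_le_order_map_sub_self Φ hΦ _)

theorem coeff_diffOp_pow_eq_zero (hΦ : ∀ i, 2 ≤ (Φ (X i) - X i).order) {j : ℕ} {d : σ →₀ ℕ}
    (hj : d.degree < j) (f : MvPowerSeries σ K) : coeff d ((diffOp Φ ^ j) f) = 0 :=
  coeff_of_lt_order <| (Nat.cast_lt.mpr hj).trans_le <|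
    le_add_self.trans (order_add_le_order_diffOp_pow hΦ j f)

theorem eval_natCast_iterateCoeffPoly [CharZero K] (hΦ : ∀ i, 2 ≤ (Φ (X i) - X i).order)
    (e : σ →₀ ℕ) (f : MvPowerSeries σ K) (m : ℕ) :
    (iterateCoeffPoly Φ e f).eval (m : K) = coeff e ((Φ ^ m) f) := by
  rw [iterateCoeffPoly_apply, Polynomial.eval_finsetSum, pow_apply_eq_diffOp_add_one_pow,
    (Commute.one_right _).add_pow]
  simp only [Polynomial.eval_smul, eval_natCast_choosePoly, smul_eq_mul, LinearMap.coe_sum,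
    Finset.sum_apply, map_sum, one_pow, mul_one, Module.End.mul_apply, Module.End.natCast_apply,
    map_nsmul]
  simp only [nsmul_eq_mul]
  rw [Finset.sum_subset (Finset.range_subset_range.mpr (Nat.le_add_right _ m)),
    ← Finset.sum_subset (Finset.range_subset_range.mpr (by omega : m + 1 ≤ e.degree + 1 + m))]
  · exact Finset.sum_congr rfl fun j _ => mul_comm _ _
  · intro j _ hj
    rw [Finset.mem_range, not_lt] at hj
    rw [Nat.choose_eq_zero_of_lt (by omega), Nat.cast_zero, mul_zero]
  · intro j _ hj
    rw [Finset.mem_range, not_lt] at hj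
    rw [coeff_diffOp_pow_eq_zero hΦ (by omega), zero_mul]

theorem iterateCoeffPoly_mul [CharZero K] [DecidableEq σ] (hΦ : ∀ i, 2 ≤ (Φ (X i) - X i).order)
    (d : σ →₀ ℕ) (a b : MvPowerSeries σ K) :
    iterateCoeffPoly Φ d (a * b) =
      ∑ p ∈ Finset.HasAntidiagonal.antidiagonal d,
        iterateCoeffPoly Φ p.1 a * iterateCoeffPoly Φ p.2 b := by
  refine Polynomial.eq_of_infinite_eval_eq _ _
    ((Set.infinite_range_of_injective Nat.cast_injective).mono ?_)
  rintro _ ⟨m, rfl⟩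
  simp only [Set.mem_ofPred_eq, Polynomial.eval_finsetSum, Polynomial.eval_mul,
    eval_natCast_iterateCoeffPoly hΦ, map_mul, coeff_mul]

theorem log_mul [CharZero K] (hΦ : ∀ i, 2 ≤ (Φ (X i) - X i).order) (a b : MvPowerSeries σ K) :
    log Φ (a * b) = a • log Φ b + b • log Φ a := by
  have heval_zero (e : σ →₀ ℕ) (f : MvPowerSeries σ K) :
      (iterateCoeffPoly Φ e f).eval 0 = coeff e f := by
    simpa using eval_natCast_iterateCoeffPoly hΦ e f 0
  classical
  ext d
  rw [coeff_log, iterateCoeffPoly_mul hΦ, map_sum, Polynomial.eval_finsetSum, map_add,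
    smul_eq_mul, smul_eq_mul, mul_comm b, coeff_mul, coeff_mul, ← Finset.sum_add_distrib]
  refine Finset.sum_congr rfl fun p _ => ?_
  rw [Polynomial.derivative_mul, Polynomial.eval_add, Polynomial.eval_mul, Polynomial.eval_mul,
    heval_zero, heval_zero, ← coeff_log, ← coeff_log]
  ring

theorem coeff_log_eq_sum (hΦ : ∀ i, 2 ≤ (Φ (X i) - X i).order) {e : σ →₀ ℕ} {N : ℕ}
    (hN : e.degree ≤ N) (f : MvPowerSeries σ K) :
    coeff e (log Φ f) = ∑ j ∈ Finset.range (N + 1),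
      (derivative (choosePoly K j)).eval 0 * coeff e ((diffOp Φ ^ j) f) := by
  rw [coeff_log, iterateCoeffPoly_apply, map_sum, Polynomial.eval_finsetSum]
  refine Finset.sum_subset (Finset.range_subset_range.mpr (by omega)) (fun j _ hj => ?_)
    |>.trans (Finset.sum_congr rfl fun j _ => ?_)
  · rw [Finset.mem_range, not_lt] at hj
    rw [coeff_diffOp_pow_eq_zero hΦ (by omega), zero_smul, map_zero, Polynomial.eval_zero]
  · rw [Polynomial.derivative_smul, Polynomial.eval_smul, smul_eq_mul, mul_comm]

theorem coeff_log_eq_coeff_map_sub_self (hΦ : ∀ i, 2 ≤ (Φ (X i) - X i).order)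
    {f : MvPowerSeries σ K} {d : σ →₀ ℕ} (hd : d.degree ≤ (Φ f - f).order) :
    coeff d (log Φ f) = coeff d (Φ f - f) := by
  rw [coeff_log_eq_sum hΦ (Nat.le_succ d.degree), Finset.sum_eq_single 1]
  · simp [choosePoly_one, diffOp_apply]
  · intro j _ hj
    rcases j with _ | _ | k
    · simp [choosePoly_zero]
    · exact absurd rfl hj
    · rw [pow_succ, Module.End.mul_apply, diffOp_apply, coeff_of_lt_order, mul_zero]
      calc (d.degree : ℕ∞) < d.degree + 1 := by exact_mod_cast d.degree.lt_succ_self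
        _ ≤ (Φ f - f).order + (k + 1 : ℕ) := by gcongr; exact_mod_cast k.succ_pos
        _ ≤ _ := order_add_le_order_diffOp_pow hΦ _ _
  · simp

theorem map_eq_self_of_log_eq_zero (hΦ : ∀ i, 2 ≤ (Φ (X i) - X i).order)
    {f : MvPowerSeries σ K} (hf : log Φ f = 0) : Φ f = f := by
  by_contra hne
  obtain ⟨d, hd, hdeg⟩ :=
    exists_coeff_ne_zero_and_order (ne_zero_iff_order_finite.mp (sub_ne_zero.mpr hne))
  rw [← coeff_log_eq_coeff_map_sub_self hΦ hdeg.le, hf, map_zero] at hd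
  exact hd rfl

theorem log_map_of_commute (hΦ : ∀ i, 2 ≤ (Φ (X i) - X i).order)
    {Ψ : MvPowerSeries σ K →ₐ[K] MvPowerSeries σ K} (hΨ : ∀ i, constantCoeff (Ψ (X i)) = 0)
    (hcomm : ∀ f, Φ (Ψ f) = Ψ (Φ f)) (f : MvPowerSeries σ K) :
    log Φ (Ψ f) = Ψ (log Φ f) := by
  ext d
  -- the truncation of `log Φ f` below degree `d.degree + 1`, which visibly commutes with `Ψ`
  set S := ∑ j ∈ Finset.range (d.degree + 1),
    (derivative (choosePoly K j)).eval 0 • (diffOp Φ ^ j) f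
  have hS : ((d.degree + 1 : ℕ) : ℕ∞) ≤ (log Φ f - S).order := le_order fun e he => by
    rw [map_sub, coeff_log_eq_sum hΦ (N := d.degree) (Nat.lt_succ_iff.mp (by exact_mod_cast he)),
      map_sum]
    simp
  calc coeff d (log Φ (Ψ f)) = coeff d (Ψ S) := by
        rw [coeff_log_eq_sum hΦ le_rfl, map_sum, map_sum]
        simp [diffOp_pow_map_of_commute Φ hcomm]
    _ = coeff d (Ψ (log Φ f)) := by
        rw [← sub_eq_zero, ← map_sub, ← map_sub, ← neg_sub, map_neg, map_neg, neg_eq_zero]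
        exact coeff_of_lt_order ((Nat.cast_lt.mpr d.degree.lt_succ_self).trans_le
          (hS.trans (order_le_order_map Ψ hΨ _)))

end Log

end MvPowerSeries

namespace FormalGroups

open MvPowerSeries

theorem TangentToId.two_le_order_sub_X {n : ℕ} {f : FDiff n} (hf : TangentToId f) (i : Fin n) :
    2 ≤ (f.unop (X i) - X i).order := by
  refine le_order fun d hd => ?_
  obtain hd0 | hd1 : d.degree = 0 ∨ d.degree = 1 := by
    have : d.degree < 2 := by exact_mod_cast hd
    omega
  · rw [(Finsupp.degree_eq_zero_iff d).mp hd0, coeff_zero_eq_constantCoeff_apply, map_sub,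
      constantCoeff_X, sub_zero]
    exact hf.1 i
  · obtain ⟨j, hj⟩ : ∃ j, j ∈ d.support := Finsupp.support_nonempty_iff.mpr (by
      rintro rfl; simp at hd1)
    have hle : Finsupp.single j 1 ≤ d :=
      Finsupp.single_le_iff.mpr (Nat.one_le_iff_ne_zero.mpr (Finsupp.mem_support_iff.mp hj))
    have hdj : d = Finsupp.single j 1 := by
      have hdeg := congrArg Finsupp.degree (tsub_add_cancel_of_le hle)
      rw [map_add, Finsupp.degree_single, hd1, add_eq_right,
        Finsupp.degree_eq_zero_iff, tsub_eq_zero_iff_le] at hdeg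
      exact le_antisymm hdeg hle
    rw [hdj, map_sub, coeff_index_single_X, sub_eq_zero]
    exact hf.2 i j

theorem abelian_invariant_vector_field_or_trivial_tangent_general
    (n : ℕ) (G : Subgroup (FDiff n))
    (hab : ∀ g ∈ G, ∀ h ∈ G, g * h = h * g) :
    (∃ X : FVF n, X ≠ 0 ∧ VanishesAtZero X ∧ ∀ g ∈ G, InvariantBy g X) ∨
    (∀ g ∈ G, TangentToId g → g = 1) := by
  refine or_iff_not_imp_right.mpr fun hG => ?_
  obtain ⟨f, hfG, hf, hf1⟩ : ∃ f ∈ G, TangentToId f ∧ f ≠ 1 := by simpa using hG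
  set Φ : FPS n →ₐ[ℂ] FPS n := f.unop.toAlgHom
  have hΦ : ∀ i, 2 ≤ (Φ (X i) - X i).order := hf.two_le_order_sub_X
  let L : FVF n := Derivation.mk' (log Φ) (log_mul hΦ)
  refine ⟨L, fun hX => hf1 ?_, fun i => constantCoeff_log _, fun g hg h => ?_⟩
  · refine MulOpposite.unop_injective (AlgEquiv.ext fun h => ?_)
    exact map_eq_self_of_log_eq_zero hΦ (DFunLike.congr_fun hX h)
  · have hcomm (x : FPS n) : Φ (g.unop x) = g.unop (Φ x) :=
      DFunLike.congr_fun (congrArg MulOpposite.unop (hab g hg f hfG)) x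
    rw [Derivation.coe_mk']
    exact log_map_of_commute hΦ (Ψ := g.unop.toAlgHom) (constantCoeff_map_X_eq_zero g.unop) hcomm h

/-- An abelian subgroup `G` of formal diffeomorphisms of `(ℂⁿ,0)`
either admits a nonzero invariant formal vector field, or its only element
tangent to the identity is the identity. -/
theorem abelian_invariant_vector_field_or_trivial_tangent
    (n : ℕ) (hn : 1 ≤ n) (G : Subgroup (FDiff n))
    (hab : ∀ g ∈ G, ∀ h ∈ G, g * h = h * g) :
    (∃ X : FVF n, X ≠ 0 ∧ VanishesAtZero X ∧ ∀ g ∈ G, InvariantBy g X) ∨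
    (∀ g ∈ G, TangentToId g → g = 1) :=
  abelian_invariant_vector_field_or_trivial_tangent_general n G hab

end FormalGroups
end
end

section
/- Let G ≤ Diff̂(ℂⁿ,0) be a subgroup containing two dicritic diffeomorphisms tangent to the identity with different orders. Then G is not solvable. -/
noncomputable section

/-!
Write `Φ = f^*` and `Ψ = g^*` for the pullbacks. If `f` is dicritic of order `k`, then
`Φ = id + p·R⃗ + (terms raising the order by at least k + 1)` on all of `ℂ[[z]]`, where
`R⃗ = Σ zᵢ ∂/∂zᵢ` is the radial field, and Euler's identity gives `R⃗(p zᵢ) = (k + 1) p zᵢ`.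
Hence `ΨΦ zᵢ - ΦΨ zᵢ ≡ (k - l) p q zᵢ` modulo order `k + l + 2`: the commutator of dicritic
diffeomorphisms of different orders `k ≠ l` is dicritic of order `k + l`, with leading part
`(k - l) p q`. So `(x, y) ↦ (⁅x, y⁆, ⁅x, ⁅x, y⁆⁆)` carries such a pair one step down the
derived series, and since dicritic diffeomorphisms are not the identity, the derived series
never reaches `⊥`. The expansions pass from the coordinates `zᵢ` to arbitrary series by
writing `F = F(0) + Σ zᵢ Gᵢ` and inducting on the order.
-/

open scoped commutatorElement

theorem not_isSolvable_of_commutatorElement_closed {K : Type*} [Group K] (P : K → K → Prop)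
    (hP : ∀ x y, P x y → P ⁅x, y⁆ ⁅x, ⁅x, y⁆⁆) (hne : ∀ x y, P x y → x ≠ 1) {x y : K}
    (hxy : P x y) : ¬ Group.IsSolvable K := by
  have key : ∀ m, ∃ x ∈ derivedSeries K m, ∃ y ∈ derivedSeries K m, P x y := by
    intro m
    induction m with
    | zero => exact ⟨x, by simp, y, by simp, hxy⟩
    | succ m ih =>
      obtain ⟨x, hx, y, hy, h⟩ := ih
      have hxy' : ⁅x, y⁆ ∈ derivedSeries K (m + 1) := by
        rw [derivedSeries_succ]; exact Subgroup.commutator_mem_commutator hx hy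
      refine ⟨_, hxy', _, ?_, hP x y h⟩
      rw [derivedSeries_succ]
      exact Subgroup.commutator_mem_commutator hx (derivedSeries_antitone K m.le_succ hxy')
  rintro ⟨m, hm⟩
  obtain ⟨x, hx, y, -, h⟩ := key m
  rw [hm, Subgroup.mem_bot] at hx
  exact hne x y h hx

namespace FormalGroups

open MvPowerSeries

variable {n : ℕ}

lemma deg_eq_degree (d : Fin n →₀ ℕ) : deg d = d.degree := rfl

lemma orderGE_iff_le_order {F : FPS n} {m : ℕ} : OrderGE F m ↔ (m : ℕ∞) ≤ F.order :=
  ⟨nat_le_order, fun h _ hd => coeff_of_lt_order (lt_of_lt_of_le (by exact_mod_cast hd) h)⟩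

namespace OrderGE

lemma zero_right (F : FPS n) : OrderGE F 0 := fun _ hd => absurd hd (Nat.not_lt_zero _)

lemma mono {F : FPS n} {m m' : ℕ} (h : OrderGE F m) (hm : m' ≤ m) : OrderGE F m' :=
  fun d hd => h d (lt_of_lt_of_le hd hm)

lemma add {F G : FPS n} {m : ℕ} (hF : OrderGE F m) (hG : OrderGE G m) : OrderGE (F + G) m :=
  fun d hd => by rw [map_add, hF d hd, hG d hd, add_zero]

lemma neg {F : FPS n} {m : ℕ} (h : OrderGE F m) : OrderGE (-F) m :=
  fun d hd => by rw [map_neg, h d hd, neg_zero]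

lemma sub {F G : FPS n} {m : ℕ} (hF : OrderGE F m) (hG : OrderGE G m) : OrderGE (F - G) m :=
  fun d hd => by rw [map_sub, hF d hd, hG d hd, sub_zero]

lemma sum {ι : Type*} {s : Finset ι} {F : ι → FPS n} {m : ℕ}
    (h : ∀ i ∈ s, OrderGE (F i) m) :
    OrderGE (∑ i ∈ s, F i) m :=
  fun d hd => by rw [map_sum]; exact Finset.sum_eq_zero fun i hi => h i hi d hd

lemma mul {F G : FPS n} {a b : ℕ} (hF : OrderGE F a) (hG : OrderGE G b) :
    OrderGE (F * G) (a + b) := by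
  rw [orderGE_iff_le_order] at *
  exact le_trans (by push_cast; exact add_le_add hF hG) le_order_mul

end OrderGE

lemma orderGE_of_isHomogeneous {F : FPS n} {m : ℕ} (hF : F.IsHomogeneous m) : OrderGE F m :=
  fun _ hd => hF.coeff_eq_zero (ne_of_lt hd)

lemma isHomogeneous_Z (i : Fin n) : (Z i).IsHomogeneous 1 := by
  intro d hd
  classical
  rw [Z, coeff_X] at hd
  split_ifs at hd with h
  · subst h; simp [Finsupp.weight_apply]
  · exact absurd rfl hd

lemma orderGE_Z (i : Fin n) : OrderGE (Z i) 1 := orderGE_of_isHomogeneous (isHomogeneous_Z i)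

lemma orderGE_one_iff {F : FPS n} : OrderGE F 1 ↔ constantCoeff F = 0 := by
  rw [orderGE_iff_le_order, Nat.cast_one, Order.one_le_iff_ne_zero,
    order_ne_zero_iff_constCoeff_eq_zero]

def radial : FVF n := ∑ i, Z i • pderiv ℂ i

lemma radial_apply (F : FPS n) : radial F = ∑ i, Z i * pderiv ℂ i F := by
  rw [radial, ← Derivation.coeFnAddMonoidHom_apply, map_sum, Finset.sum_apply]
  rfl

lemma coeff_Z_mul (i : Fin n) (d : Fin n →₀ ℕ) (F : FPS n) :
    coeff d (Z i * F) =
      if Finsupp.single i 1 ≤ d then coeff (d - Finsupp.single i 1) F else 0 := by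
  rw [Z, X, coeff_monomial_mul, one_mul]

lemma coeff_radial (d : Fin n →₀ ℕ) (F : FPS n) : coeff d (radial F) = deg d * coeff d F := by
  have hterm : ∀ i, coeff d (Z i * pderiv ℂ i F) = d i * coeff d F := by
    intro i
    rw [coeff_Z_mul, coeff_pderiv]
    split_ifs with h
    · rw [tsub_add_cancel_of_le h, Finsupp.tsub_apply, Finsupp.single_eq_same,
        Nat.cast_sub (Finsupp.single_le_iff.mp h), mul_comm]
      push_cast; ring
    · rw [Finsupp.single_le_iff, not_le, Nat.lt_one_iff] at h
      simp [h]
  rw [radial_apply, map_sum, Finset.sum_congr rfl fun i _ => hterm i, ← Finset.sum_mul,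
    deg_eq_degree, Finsupp.degree_eq_sum]
  push_cast; rfl

lemma radial_of_isHomogeneous {F : FPS n} {m : ℕ} (hF : F.IsHomogeneous m) :
    radial F = m * F := by
  ext d
  rw [coeff_radial, ← map_natCast (C (σ := Fin n) (R := ℂ)), coeff_C_mul]
  by_cases hd : deg d = m
  · rw [hd]
  · rw [hF.coeff_eq_zero hd, mul_zero, mul_zero]

lemma exists_eq_C_add_sum_Z_mul {F : FPS n} {t : ℕ} (hF : OrderGE F t) :
    ∃ (c : ℂ) (G : Fin n → FPS n),
      F = C c + ∑ i, Z i * G i ∧ ∀ i, OrderGE (G i) (t - 1) := by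
  set c := constantCoeff F
  -- `H` inverts the Euler operator `R⃗` away from the constant term, so `F - c = R⃗ H`.
  let H : FPS n := fun d => coeff d F / deg d
  have hcoeffH : ∀ d, coeff d H = coeff d F / deg d := fun _ => rfl
  refine ⟨c, fun i => pderiv ℂ i H, ?_, fun i d hd => ?_⟩
  · rw [← radial_apply]
    ext d
    rw [map_add, coeff_radial, hcoeffH, coeff_C]
    by_cases hd : d = 0
    · simp [hd, c, deg_eq_degree]
    · have : (deg d : ℂ) ≠ 0 := by
        rw [deg_eq_degree]; exact_mod_cast (Finsupp.degree_eq_zero_iff d).not.mpr hd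
      rw [if_neg hd, zero_add, mul_div_cancel₀ _ this]
  · rw [coeff_pderiv, hcoeffH, hF _ (by rw [deg_eq_degree, map_add,
      Finsupp.degree_single, ← deg_eq_degree]; omega), zero_div, zero_mul]

lemma algEquiv_apply_C (e : FPS n ≃ₐ[ℂ] FPS n) (c : ℂ) : e (C c) = C c := e.commutes c

def TangentToIdGE (e : FPS n ≃ₐ[ℂ] FPS n) (s : ℕ) : Prop :=
  ∀ i, OrderGE (e (Z i) - Z i) (s + 1)

namespace TangentToIdGE

variable {e : FPS n ≃ₐ[ℂ] FPS n} {s : ℕ}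

lemma orderGE_sub (he : TangentToIdGE e s) {F : FPS n} {t : ℕ} (hF : OrderGE F t) :
    OrderGE (e F - F) (t + s) := by
  suffices ∀ m t (F : FPS n), OrderGE F t → m ≤ t + s → OrderGE (e F - F) m from
    this _ t F hF le_rfl
  intro m
  induction m with
  | zero => exact fun _ _ _ _ => OrderGE.zero_right _
  | succ m ih =>
    intro t F hF hm
    obtain ⟨c, G, rfl, hG⟩ := exists_eq_C_add_sum_Z_mul hF
    have hGsub : ∀ i, OrderGE (e (G i) - G i) m := fun i => ih _ _ (hG i) (by omega)
    have heG : ∀ i, OrderGE (e (G i)) (min (t - 1) m) := fun i => by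
      simpa using ((hG i).mono (min_le_left _ _)).add ((hGsub i).mono (min_le_right _ _))
    have hsplit : e (C c + ∑ i, Z i * G i) - (C c + ∑ i, Z i * G i) =
        ∑ i, ((e (Z i) - Z i) * e (G i) + Z i * (e (G i) - G i)) := by
      rw [map_add, algEquiv_apply_C, add_sub_add_left_eq_sub, map_sum, ← Finset.sum_sub_distrib]
      exact Finset.sum_congr rfl fun i _ => by rw [map_mul]; ring
    rw [hsplit]
    refine OrderGE.sum fun i _ => OrderGE.add ?_ ?_
    · exact ((he i).mul (heG i)).mono (by omega)
    · exact ((orderGE_Z i).mul (hGsub i)).mono (by omega)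

lemma of_zero (e : FPS n ≃ₐ[ℂ] FPS n) : TangentToIdGE e 0 := by
  intro i
  have hZ : constantCoeff (Z i : FPS n) = 0 := by simp [Z]
  refine orderGE_one_iff.mpr ?_
  rw [map_sub, hZ, sub_zero]
  by_contra h
  have hunit : IsUnit (e (Z i)) := isUnit_iff_constantCoeff.mpr (Ne.isUnit h)
  have := isUnit_iff_constantCoeff.mp (by simpa using hunit.map e.symm)
  rw [hZ] at this
  exact not_isUnit_zero this

lemma mono (he : TangentToIdGE e s) {s' : ℕ} (hs : s' ≤ s) : TangentToIdGE e s' :=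
  fun i => (he i).mono (by omega)

end TangentToIdGE

lemma OrderGE.map_algEquiv (e : FPS n ≃ₐ[ℂ] FPS n) {F : FPS n} {t : ℕ} (hF : OrderGE F t) :
    OrderGE (e F) t := by
  simpa using hF.add ((TangentToIdGE.of_zero e).orderGE_sub hF)

namespace TangentToIdGE

variable {e e' : FPS n ≃ₐ[ℂ] FPS n} {s : ℕ}

lemma mul (he : TangentToIdGE e s) (he' : TangentToIdGE e' s) : TangentToIdGE (e * e') s := by
  intro i
  rw [AlgEquiv.mul_apply, ← sub_add_sub_cancel _ (e' (Z i))]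
  exact ((he.orderGE_sub ((orderGE_Z i).map_algEquiv e')).mono (by omega)).add (he' i)

lemma symm (he : TangentToIdGE e s) : TangentToIdGE e.symm s := by
  intro i
  have := he.orderGE_sub ((orderGE_Z i).map_algEquiv e.symm)
  rw [AlgEquiv.apply_symm_apply] at this
  simpa using (this.mono (by omega)).neg

end TangentToIdGE

lemma radial_C (c : ℂ) : radial (C c : FPS n) = 0 := radial.map_algebraMap c

lemma radial_Z (i : Fin n) : radial (Z i) = Z i := by
  simpa using radial_of_isHomogeneous (isHomogeneous_Z i)

def IsDicriticAut (e : FPS n ≃ₐ[ℂ] FPS n) (q : FPS n) (l : ℕ) : Prop :=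
  ∀ i, OrderGE (e (Z i) - Z i - q * Z i) (l + 2)

lemma IsDicriticAut.tangentToIdGE {e : FPS n ≃ₐ[ℂ] FPS n} {q : FPS n} {l : ℕ}
    (he : IsDicriticAut e q l) (hq : OrderGE q l) : TangentToIdGE e l :=
  fun i => by simpa using ((he i).mono (by omega)).add (hq.mul (orderGE_Z i))

lemma IsDicriticAut.orderGE_sub_sub_mul_radial {e : FPS n ≃ₐ[ℂ] FPS n} {q : FPS n} {l : ℕ}
    (he : IsDicriticAut e q l) (hl : 1 ≤ l) (hq : OrderGE q l) {F : FPS n} {t : ℕ}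
    (hF : OrderGE F t) : OrderGE (e F - F - q * radial F) (t + l + 1) := by
  have hT := he.tangentToIdGE hq
  suffices ∀ m t (F : FPS n), OrderGE F t → m ≤ t + l + 1 →
      OrderGE (e F - F - q * radial F) m from this _ t F hF le_rfl
  intro m
  induction m with
  | zero => exact fun _ _ _ _ => OrderGE.zero_right _
  | succ m ih =>
    intro t F hF hm
    obtain ⟨c, G, rfl, hG⟩ := exists_eq_C_add_sum_Z_mul hF
    have hGsub : ∀ i, OrderGE (e (G i) - G i - q * radial (G i)) m :=
      fun i => ih _ _ (hG i) (by omega)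
    have hsplit : e (C c + ∑ i, Z i * G i) - (C c + ∑ i, Z i * G i)
          - q * radial (C c + ∑ i, Z i * G i) =
        ∑ i, ((e (Z i) - Z i - q * Z i) * e (G i) + Z i * (e (G i) - G i - q * radial (G i))
          + q * Z i * (e (G i) - G i)) := by
      rw [map_add, algEquiv_apply_C, add_sub_add_left_eq_sub, map_add, radial_C, zero_add,
        map_sum, map_sum, Finset.mul_sum, ← Finset.sum_sub_distrib, ← Finset.sum_sub_distrib]
      refine Finset.sum_congr rfl fun i _ => ?_
      rw [map_mul, Derivation.leibniz, radial_Z, smul_eq_mul, smul_eq_mul]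
      ring
    rw [hsplit]
    refine OrderGE.sum fun i _ => (OrderGE.add (OrderGE.add ?_ ?_) ?_)
    · exact ((he i).mul ((hG i).map_algEquiv e)).mono (by omega)
    · exact ((orderGE_Z i).mul (hGsub i)).mono (by omega)
    · exact ((hq.mul (orderGE_Z i)).mul (hT.orderGE_sub (hG i))).mono (by omega)

lemma IsDicriticAut.orderGE_comm_sub {Φ Ψ : FPS n ≃ₐ[ℂ] FPS n} {p q : FPS n} {k l : ℕ}
    (hΦ : IsDicriticAut Φ p k) (hΨ : IsDicriticAut Ψ q l) (hk : 1 ≤ k) (hl : 1 ≤ l)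
    (hp : p.IsHomogeneous k) (hq : q.IsHomogeneous l) (i : Fin n) :
    OrderGE (Ψ (Φ (Z i)) - Φ (Ψ (Z i)) - C ((k : ℂ) - l) * (p * q * Z i)) (k + l + 2) := by
  have hpZ : (p * Z i).IsHomogeneous (k + 1) := hp.mul (isHomogeneous_Z i)
  have hqZ : (q * Z i).IsHomogeneous (l + 1) := hq.mul (isHomogeneous_Z i)
  have hp' := orderGE_of_isHomogeneous hp
  have hq' := orderGE_of_isHomogeneous hq
  have hΨp := hΨ.orderGE_sub_sub_mul_radial hl hq' (orderGE_of_isHomogeneous hpZ)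
  have hΦq := hΦ.orderGE_sub_sub_mul_radial hk hp' (orderGE_of_isHomogeneous hqZ)
  have hΨa := (hΨ.tangentToIdGE hq').orderGE_sub (hΦ i)
  have hΦb := (hΦ.tangentToIdGE hp').orderGE_sub (hΨ i)
  rw [radial_of_isHomogeneous hpZ] at hΨp
  rw [radial_of_isHomogeneous hqZ] at hΦq
  have hsplit : Ψ (Φ (Z i)) - Φ (Ψ (Z i)) - C ((k : ℂ) - l) * (p * q * Z i) =
      (Ψ (p * Z i) - p * Z i - q * (((k + 1 : ℕ) : FPS n) * (p * Z i)))
        - (Φ (q * Z i) - q * Z i - p * (((l + 1 : ℕ) : FPS n) * (q * Z i)))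
        + (Ψ (Φ (Z i) - Z i - p * Z i) - (Φ (Z i) - Z i - p * Z i))
        - (Φ (Ψ (Z i) - Z i - q * Z i) - (Ψ (Z i) - Z i - q * Z i)) := by
    simp only [map_sub, map_natCast]
    push_cast
    ring
  rw [hsplit]
  exact (((hΨp.mono (by omega)).sub (hΦq.mono (by omega))).add (hΨa.mono (by omega))).sub
    (hΦb.mono (by omega))

lemma isHomogeneous_coe {p : MvPolynomial (Fin n) ℂ} {k : ℕ} (hp : p.IsHomogeneous k) :
    (p : FPS n).IsHomogeneous k :=
  fun hd => hp (by rwa [MvPolynomial.coeff_coe] at hd)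

lemma isDicriticDiffeo_iff {f : FDiff n} {k : ℕ} :
    IsDicriticDiffeo f k ↔ 1 ≤ k ∧
      ∃ p : MvPolynomial (Fin n) ℂ, p.IsHomogeneous k ∧ p ≠ 0 ∧
        IsDicriticAut f.unop (p : FPS n) k := by
  have hcoeff : ∀ (p : MvPolynomial (Fin n) ℂ) i d,
      coeff d (f.unop (Z i) - Z i - (p : FPS n) * Z i) =
        coeff d (comp f i) - coeff d (Z i) - coeff d ((p : FPS n) * Z i) := by
    intro p i d
    rw [map_sub, map_sub, comp]
  constructor
  · rintro ⟨hk, hlow, p, hp, hp0, hlead⟩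
    have hpZ : ∀ i, ((p : FPS n) * Z i).IsHomogeneous (k + 1) :=
      fun i => IsHomogeneous.mul (isHomogeneous_coe hp) (isHomogeneous_Z i)
    refine ⟨hk, p, hp, hp0, fun i d hd => ?_⟩
    rw [hcoeff p]
    rcases Nat.lt_or_ge (deg d) (k + 1) with hd' | hd'
    · rw [hlow i d (by omega),
        IsHomogeneous.coeff_eq_zero (hpZ i) (by rw [← deg_eq_degree]; omega)]
      ring
    · rw [hlead i d (by omega),
        IsHomogeneous.coeff_eq_zero (isHomogeneous_Z i) (by rw [← deg_eq_degree]; omega)]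
      ring
  · rintro ⟨hk, p, hp, hp0, hf⟩
    have hpZ : ∀ i, ((p : FPS n) * Z i).IsHomogeneous (k + 1) :=
      fun i => IsHomogeneous.mul (isHomogeneous_coe hp) (isHomogeneous_Z i)
    refine ⟨hk, fun i d hd => ?_, p, hp, hp0, fun i d hd => ?_⟩
    · have := hf i d (by omega)
      rw [hcoeff p,
        IsHomogeneous.coeff_eq_zero (hpZ i) (by rw [← deg_eq_degree]; omega)] at this
      linear_combination this
    · have := hf i d (by omega)
      rw [hcoeff p,
        IsHomogeneous.coeff_eq_zero (isHomogeneous_Z i) (by rw [← deg_eq_degree]; omega)] at this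
      linear_combination this

lemma comp_commutatorElement (f g : FDiff n) (i : Fin n) :
    comp ⁅f, g⁆ i = (f.unop * g.unop).symm (g.unop (f.unop (Z i))) := by
  simp only [comp, commutatorElement_def, MulOpposite.unop_mul, MulOpposite.unop_inv,
    AlgEquiv.mul_apply, AlgEquiv.aut_inv]
  rfl

lemma IsDicriticDiffeo.commutatorElement {f g : FDiff n} {k l : ℕ} (hf : IsDicriticDiffeo f k)
    (hg : IsDicriticDiffeo g l) (hkl : k ≠ l) : IsDicriticDiffeo ⁅f, g⁆ (k + l) := by
  obtain ⟨hk, p, hp, hp0, hΦ⟩ := isDicriticDiffeo_iff.mp hf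
  obtain ⟨hl, q, hq, hq0, hΨ⟩ := isDicriticDiffeo_iff.mp hg
  have hP : (MvPolynomial.C ((k : ℂ) - l) * (p * q)).IsHomogeneous (k + l) := by
    simpa using (MvPolynomial.isHomogeneous_C (Fin n) ((k : ℂ) - l)).mul (hp.mul hq)
  have hP0 : MvPolynomial.C ((k : ℂ) - l) * (p * q) ≠ 0 :=
    mul_ne_zero (by simpa [sub_eq_zero] using hkl) (mul_ne_zero hp0 hq0)
  refine isDicriticDiffeo_iff.mpr ⟨by omega, _, hP, hP0, fun i => ?_⟩
  set Φ := f.unop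
  set Ψ := g.unop
  have hp' := orderGE_of_isHomogeneous (isHomogeneous_coe hp)
  have hq' := orderGE_of_isHomogeneous (isHomogeneous_coe hq)
  have hb : TangentToIdGE (Φ * Ψ).symm (min k l) :=
    (((hΦ.tangentToIdGE hp').mono (min_le_left k l)).mul
      ((hΨ.tangentToIdGE hq').mono (min_le_right k l))).symm
  set D := Ψ (Φ (Z i)) - Φ (Ψ (Z i))
  have hD := hΦ.orderGE_comm_sub hΨ hk hl (isHomogeneous_coe hp) (isHomogeneous_coe hq) i
  have hPZ : OrderGE (C ((k : ℂ) - l) * ((p : FPS n) * (q : FPS n) * Z i)) (k + l + 1) :=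
    ((OrderGE.zero_right _).mul ((hp'.mul hq').mul (orderGE_Z i))).mono (by omega)
  have hD' : OrderGE D (k + l + 1) := by simpa using (hD.mono (by omega)).add hPZ
  have hcomm : comp ⁅f, g⁆ i - Z i = (Φ * Ψ).symm D := by
    rw [comp_commutatorElement, map_sub, ← AlgEquiv.mul_apply Φ Ψ, AlgEquiv.symm_apply_apply]
  change OrderGE (comp ⁅f, g⁆ i - Z i - _) _
  rw [hcomm, MvPolynomial.coe_mul, MvPolynomial.coe_mul, MvPolynomial.coe_C, mul_assoc,
    ← sub_add_sub_cancel _ D]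
  exact ((hb.orderGE_sub hD').mono (by omega)).add hD

lemma IsDicriticDiffeo.ne_one {f : FDiff n} {k : ℕ} (hf : IsDicriticDiffeo f k) : f ≠ 1 := by
  rintro rfl
  obtain ⟨hk, p, hp, hp0, h1⟩ := isDicriticDiffeo_iff.mp hf
  obtain ⟨d, hd⟩ := MvPolynomial.ne_zero_iff.mp hp0
  have hdeg : deg d = k := by rw [deg_eq_degree, Finsupp.degree_eq_weight_one]; exact hp hd
  obtain ⟨i, hi⟩ : ∃ i, d i ≠ 0 := by
    by_contra! h
    rw [show d = 0 from Finsupp.ext h, deg_eq_degree, map_zero] at hdeg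
    omega
  have hdeg' : deg (d + Finsupp.single i 1) < k + 2 := by
    rw [deg_eq_degree, map_add, Finsupp.degree_single, ← deg_eq_degree]
    omega
  have := h1 i _ hdeg'
  rw [MulOpposite.unop_one, AlgEquiv.one_apply, sub_self, zero_sub, map_neg, Z,
    ← MvPolynomial.coe_X, ← MvPolynomial.coe_mul, MvPolynomial.coeff_coe,
    MvPolynomial.coeff_mul_X, neg_eq_zero] at this
  exact hd this

/-- a subgroup of `Diff̂(ℂⁿ,0)` containing two dicritic
diffeomorphisms tangent to the identity with different orders is not solvable. -/
theorem not_solvable_of_two_dicritic_different_orders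
    (n : ℕ) (G : Subgroup (FDiff n))
    (f g : FDiff n) (hf : f ∈ G) (hg : g ∈ G) (k l : ℕ) (hkl : k ≠ l)
    (hfd : IsDicriticDiffeo f k) (hgd : IsDicriticDiffeo g l) :
    ¬ IsSolvable G := by
  refine not_isSolvable_of_commutatorElement_closed
    (fun x y : G => ∃ a b, a ≠ b ∧
      IsDicriticDiffeo (x : FDiff n) a ∧ IsDicriticDiffeo (y : FDiff n) b)
    ?_ ?_ (x := ⟨f, hf⟩) (y := ⟨g, hg⟩) ⟨k, l, hkl, hfd, hgd⟩
  · rintro x y ⟨a, b, hab, hx, hy⟩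
    have hcoe : ∀ x y : G, ((⁅x, y⁆ : G) : FDiff n) = ⁅(x : FDiff n), (y : FDiff n)⁆ :=
      map_commutatorElement G.subtype
    have hxy := hx.commutatorElement hy hab
    refine ⟨a + b, a + (a + b), by grind [hx.1], by rwa [hcoe], ?_⟩
    rw [hcoe, hcoe]
    exact hx.commutatorElement hxy (by grind [hy.1])
  · rintro x y ⟨a, -, -, hx, -⟩ rfl
    exact hx.ne_one rfl

end FormalGroups
end
end
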